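/- There exists a constant k₀ > 0 such that for every s ∈ (1/2, 1] and every t ∈ ℝ, F̄(t) ≤ F_s(t)^{1/s} ≤ F̄(t) + k₀, where F̄(t) = 0 if |t| ≤ 1 and F̄(t) = |t| if |t| > 1. In fact one may take k₀ = ((3/8)(1 + 10/3 + 5))². -/

import Mathlib

/-!
On `|t| > 1` we have `θ(t) = 1`, so `F_s(t)^{1/s} = |t| = F̄(t)`. On `|t| ≤ 1`, substituting
`u = |t|^{1/2}` turns `θ` into the polynomial `(3/8)u⁵ − (5/4)u³ + (15/8)u`, and
`1 − θ = (1 − u)³ (1 + 9u/8 + 3u²/8)`; hence `0 ≤ θ ≤ 1`, so `0 ≤ F_s(t)^{1/s} ≤ 1 ≤ k₀`.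
-/

/-- The cutoff function `θ` of Definition 4.3: `θ(t) = (3/8)|t|^{1/2}(|t|² − (10/3)|t| + 5)`
for `|t| ≤ 1` and `θ(t) = 1` for `|t| > 1`. -/
noncomputable def theta (t : ℝ) : ℝ :=
  if |t| ≤ 1 then (3 / 8) * |t| ^ ((1 : ℝ) / 2) * (|t| ^ 2 - (10 / 3) * |t| + 5) else 1

/-- The auxiliary function `F_s(t) = θ(t)·|t|^s` of Definition 4.3. -/
noncomputable def Fs (s t : ℝ) : ℝ := theta t * |t| ^ s

/-- The function `F̄(t) = 0` for `|t| ≤ 1` and `F̄(t) = |t|` for `|t| > 1`. -/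
noncomputable def Fbar (t : ℝ) : ℝ := if |t| ≤ 1 then 0 else |t|

open Real

lemma theta_of_abs_le_one {t : ℝ} (ht : |t| ≤ 1) :
    theta t = 3 / 8 * √|t| * (√|t| ^ 4 - 10 / 3 * √|t| ^ 2 + 5) := by
  have hsq : √|t| ^ 2 = |t| := sq_sqrt (abs_nonneg t)
  rw [theta, if_pos ht, ← sqrt_eq_rpow, show √|t| ^ 4 = (√|t| ^ 2) ^ 2 by ring,
    hsq]

lemma theta_of_one_lt_abs {t : ℝ} (ht : 1 < |t|) : theta t = 1 :=
  if_neg ht.not_ge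

lemma theta_nonneg (t : ℝ) : 0 ≤ theta t := by
  rcases le_or_gt |t| 1 with ht | ht
  · rw [theta_of_abs_le_one ht]
    have : 0 ≤ √|t| ^ 4 - 10 / 3 * √|t| ^ 2 + 5 := by nlinarith [sq_nonneg (√|t| ^ 2 - 5 / 3)]
    positivity
  · rw [theta_of_one_lt_abs ht]
    exact zero_le_one

lemma theta_le_one (t : ℝ) : theta t ≤ 1 := by
  rcases le_or_gt |t| 1 with ht | ht
  · rw [theta_of_abs_le_one ht]
    set u := √|t|
    have hu0 : 0 ≤ u := sqrt_nonneg _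
    have hu1 : u ≤ 1 := sqrt_le_one.mpr ht
    have key : 1 - 3 / 8 * u * (u ^ 4 - 10 / 3 * u ^ 2 + 5)
        = (1 - u) ^ 3 * (1 + 9 / 8 * u + 3 / 8 * u ^ 2) := by ring
    have hfactor : 0 ≤ (1 - u) ^ 3 * (1 + 9 / 8 * u + 3 / 8 * u ^ 2) := by
      have : 0 ≤ 1 - u := sub_nonneg.mpr hu1
      positivity
    linarith
  · exact (theta_of_one_lt_abs ht).le

lemma Fs_nonneg (s t : ℝ) : 0 ≤ Fs s t :=
  mul_nonneg (theta_nonneg t) (rpow_nonneg (abs_nonneg t) s)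

lemma Fs_le_one {s t : ℝ} (hs : 0 ≤ s) (ht : |t| ≤ 1) : Fs s t ≤ 1 :=
  mul_le_one₀ (theta_le_one t) (rpow_nonneg (abs_nonneg t) s) (rpow_le_one (abs_nonneg t) ht hs)

lemma Fs_rpow_one_div_of_one_lt_abs {s t : ℝ} (hs : s ≠ 0) (ht : 1 < |t|) :
    Fs s t ^ (1 / s) = |t| := by
  rw [Fs, theta_of_one_lt_abs ht, one_mul, one_div, rpow_rpow_inv (abs_nonneg t) hs]

lemma Fbar_le_Fs_rpow_one_div_le_add_one {s : ℝ} (hs : 0 < s) (t : ℝ) :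
    Fbar t ≤ Fs s t ^ (1 / s) ∧ Fs s t ^ (1 / s) ≤ Fbar t + 1 := by
  rcases le_or_gt |t| 1 with ht | ht
  · rw [Fbar, if_pos ht, zero_add]
    exact ⟨rpow_nonneg (Fs_nonneg s t) _,
      rpow_le_one (Fs_nonneg s t) (Fs_le_one hs.le ht) (one_div_pos.mpr hs).le⟩
  · rw [Fbar, if_neg ht.not_ge, Fs_rpow_one_div_of_one_lt_abs hs.ne' ht]
    exact ⟨le_rfl, le_add_of_nonneg_right zero_le_one⟩

/-- There is `k₀ > 0` such that `F̄(t) ≤ F_s(t)^{1/s} ≤ F̄(t) + k₀` for all `s ∈ (1/2,1]`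
and `t ∈ ℝ`; in fact one may take `k₀ = ((3/8)(1 + 10/3 + 5))²`. -/
theorem stmt_17 :
    ∃ k₀ : ℝ, k₀ = ((3 / 8) * (1 + 10 / 3 + 5)) ^ 2 ∧ 0 < k₀ ∧
      ∀ s : ℝ, 1 / 2 < s → s ≤ 1 → ∀ t : ℝ,
        Fbar t ≤ Fs s t ^ (1 / s) ∧ Fs s t ^ (1 / s) ≤ Fbar t + k₀ := by
  refine ⟨((3 / 8) * (1 + 10 / 3 + 5)) ^ 2, rfl, by norm_num, fun s hs _ t => ?_⟩
  obtain ⟨hlow, hup⟩ := Fbar_le_Fs_rpow_one_div_le_add_one (by linarith : 0 < s) t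
  exact ⟨hlow, hup.trans (by norm_num)⟩
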